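/- Let X₁, X₂, W₁, Y₂ be discrete random variables on finite alphabets. Then H(W₁ | Y₂) ≥ H(X₁) − I(X₁, X₂; Y₂) − H(X₁, X₂ | W₁, Y₂) − H(X₁ | W₁, X₂). -/

import Mathlib

/-! Expanding the definitions, the two sides differ by
`(H(X₁,X₂) − H(X₁)) + (H(X₁,X₂,W₁,Y₂) − H(X₁,X₂,Y₂)) + H(X₁ | W₁,X₂)`.
Each bracket is nonnegative because entropy does not increase under a deterministic map
(here a coordinate projection): writing `H(X) = −∑ ω, μ ω · log p_X(X ω)`, one has
`p_X(X ω) ≤ p_{f∘X}(f (X ω))` pointwise. -/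

open Finset

/-- Probability mass of the value `a` of the random variable `X` under the
weight function `μ` on a finite sample space. -/
noncomputable def pmf' {Ω A : Type*} [Fintype Ω] [DecidableEq A]
    (μ : Ω → ℝ) (X : Ω → A) (a : A) : ℝ :=
  ∑ ω, if X ω = a then μ ω else 0

/-- Shannon entropy (base 2) of a discrete random variable. -/
noncomputable def H' {Ω A : Type*} [Fintype Ω] [Fintype A] [DecidableEq A]
    (μ : Ω → ℝ) (X : Ω → A) : ℝ :=
  -∑ a, pmf' μ X a * Real.logb 2 (pmf' μ X a)

/-- Conditional entropy `H(X | Y)`. -/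
noncomputable def condH {Ω A B : Type*} [Fintype Ω] [Fintype A] [Fintype B]
    [DecidableEq A] [DecidableEq B] (μ : Ω → ℝ) (X : Ω → A) (Y : Ω → B) : ℝ :=
  H' μ (fun ω => (X ω, Y ω)) - H' μ Y

/-- Mutual information `I(X; Y)`. -/
noncomputable def mi {Ω A B : Type*} [Fintype Ω] [Fintype A] [Fintype B]
    [DecidableEq A] [DecidableEq B] (μ : Ω → ℝ) (X : Ω → A) (Y : Ω → B) : ℝ :=
  H' μ X + H' μ Y - H' μ (fun ω => (X ω, Y ω))

/-- Conditional mutual information `I(X; Y | Z) = H(X|Z) - H(X|Y,Z)`. -/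
noncomputable def condMI {Ω A B C : Type*} [Fintype Ω] [Fintype A] [Fintype B] [Fintype C]
    [DecidableEq A] [DecidableEq B] [DecidableEq C]
    (μ : Ω → ℝ) (X : Ω → A) (Y : Ω → B) (Z : Ω → C) : ℝ :=
  condH μ X Z - condH μ X (fun ω => (Y ω, Z ω))

/-- `X` and `Y` are conditionally independent given `Z`. -/
def CondIndepRV {Ω A B C : Type*} [Fintype Ω] [DecidableEq A] [DecidableEq B] [DecidableEq C]
    (μ : Ω → ℝ) (X : Ω → A) (Y : Ω → B) (Z : Ω → C) : Prop :=
  ∀ (a : A) (b : B) (c : C),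
    pmf' μ (fun ω => (X ω, Y ω, Z ω)) (a, b, c) * pmf' μ Z c =
      pmf' μ (fun ω => (X ω, Z ω)) (a, c) * pmf' μ (fun ω => (Y ω, Z ω)) (b, c)

/-- `μ` is a probability distribution on the finite sample space. -/
def IsProb {Ω : Type*} [Fintype Ω] (μ : Ω → ℝ) : Prop :=
  (∀ ω, 0 ≤ μ ω) ∧ ∑ ω, μ ω = 1

section Entropy

variable {Ω A C : Type*} [Fintype Ω] [Fintype A] [DecidableEq A] [DecidableEq C]
  {μ : Ω → ℝ}

omit [Fintype A] in
lemma le_pmf'_apply (hμ : ∀ ω, 0 ≤ μ ω) (X : Ω → A) (ω : Ω) : μ ω ≤ pmf' μ X (X ω) := by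
  unfold pmf'
  simpa using single_le_sum (f := fun ω' => if X ω' = X ω then μ ω' else 0)
    (fun ω' _ => by split_ifs <;> simp [hμ ω']) (mem_univ ω)

omit [Fintype A] in
lemma pmf'_le_pmf'_comp (hμ : ∀ ω, 0 ≤ μ ω) (X : Ω → A) (f : A → C) (a : A) :
    pmf' μ X a ≤ pmf' μ (fun ω => f (X ω)) (f a) :=
  sum_le_sum fun ω _ => by
    split_ifs with hX hfX
    exacts [le_rfl, absurd (congrArg f hX) hfX, hμ ω, le_rfl]

lemma sum_pmf'_mul (μ : Ω → ℝ) (X : Ω → A) (g : A → ℝ) :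
    ∑ a, pmf' μ X a * g a = ∑ ω, μ ω * g (X ω) := by
  simp only [pmf', sum_mul, ite_mul, zero_mul]
  rw [sum_comm]
  simp

lemma H'_eq_neg_sum (μ : Ω → ℝ) (X : Ω → A) :
    H' μ X = -∑ ω, μ ω * Real.logb 2 (pmf' μ X (X ω)) := by
  rw [H', sum_pmf'_mul μ X fun a => Real.logb 2 (pmf' μ X a)]

lemma H'_comp_le [Fintype C] (hμ : ∀ ω, 0 ≤ μ ω) (X : Ω → A) (f : A → C) :
    H' μ (fun ω => f (X ω)) ≤ H' μ X := by
  rw [H'_eq_neg_sum, H'_eq_neg_sum, neg_le_neg_iff]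
  refine sum_le_sum fun ω _ => ?_
  rcases (hμ ω).eq_or_lt with hω | hω
  · simp [← hω]
  · have hpos : 0 < pmf' μ X (X ω) := hω.trans_le (le_pmf'_apply hμ X ω)
    gcongr
    · norm_num
    · exact pmf'_le_pmf'_comp hμ X f (X ω)

lemma condH_nonneg [Fintype C] (hμ : ∀ ω, 0 ≤ μ ω) (X : Ω → A) (Y : Ω → C) :
    0 ≤ condH μ X Y :=
  sub_nonneg.mpr (H'_comp_le hμ (fun ω => (X ω, Y ω)) Prod.snd)

end Entropy

/-- Equivocation decomposition:
`H(W₁ | Y₂) ≥ H(X₁) − I(X₁, X₂; Y₂) − H(X₁, X₂ | W₁, Y₂) − H(X₁ | W₁, X₂)`. -/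
theorem stmt13 {Ω A B C D : Type*} [Fintype Ω] [Fintype A] [Fintype B] [Fintype C] [Fintype D]
    [DecidableEq A] [DecidableEq B] [DecidableEq C] [DecidableEq D]
    (μ : Ω → ℝ) (hμ : IsProb μ)
    (X1 : Ω → A) (X2 : Ω → B) (W1 : Ω → C) (Y2 : Ω → D) :
    condH μ W1 Y2 ≥
      H' μ X1 - mi μ (fun ω => (X1 ω, X2 ω)) Y2 -
        condH μ (fun ω => (X1 ω, X2 ω)) (fun ω => (W1 ω, Y2 ω)) -
        condH μ X1 (fun ω => (W1 ω, X2 ω)) := by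
  obtain ⟨hμ0, -⟩ := hμ
  have hX1 : H' μ X1 ≤ H' μ (fun ω => (X1 ω, X2 ω)) :=
    H'_comp_le hμ0 (fun ω => (X1 ω, X2 ω)) Prod.fst
  have hW1 : H' μ (fun ω => ((X1 ω, X2 ω), Y2 ω)) ≤
      H' μ (fun ω => ((X1 ω, X2 ω), (W1 ω, Y2 ω))) :=
    H'_comp_le hμ0 (fun ω => ((X1 ω, X2 ω), (W1 ω, Y2 ω))) fun p => (p.1, p.2.2)
  have hX1_cond := condH_nonneg hμ0 X1 (fun ω => (W1 ω, X2 ω))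
  simp only [condH, mi] at hX1_cond ⊢
  linarith
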